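/- Let (s_1, …, s_n) be a fan ordering of a fan in a matroid M. Then λ_M({s_1, …, s_n}) ≤ 2. -/

import Mathlib

open scoped Matroid

universe u v

namespace Matroid

variable {α : Type u} {β : Type v}

/-- Deletion of a set of elements from a matroid. -/
def Del (M : Matroid α) (D : Set α) : Matroid α := M ↾ (M.E \ D)

/-- Contraction of a set of elements in a matroid. -/
def Con (M : Matroid α) (C : Set α) : Matroid α := (M✶.Del C)✶

/-- A circuit is a minimal dependent set. -/
def IsCircuit' (M : Matroid α) (C : Set α) : Prop :=
  M.Dep C ∧ ∀ ⦃D : Set α⦄, D ⊂ C → M.Indep D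

/-- A cocircuit is a circuit of the dual matroid. -/
def IsCocircuit' (M : Matroid α) (C : Set α) : Prop := M✶.IsCircuit' C

/-- A triangle is a 3-element circuit. -/
def IsTriangle (M : Matroid α) (T : Set α) : Prop := M.IsCircuit' T ∧ T.encard = 3

/-- A triad is a 3-element cocircuit. -/
def IsTriad (M : Matroid α) (T : Set α) : Prop := M.IsCocircuit' T ∧ T.encard = 3

/-- A quad is a 4-element set that is both a circuit and a cocircuit. -/
def IsQuad (M : Matroid α) (Q : Set α) : Prop :=
  M.IsCircuit' Q ∧ M.IsCocircuit' Q ∧ Q.encard = 4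

/-- The rank (in `ℕ∞`) of a set in a matroid: the supremum of the cardinalities
of independent subsets of the set. -/
noncomputable def eRk' (M : Matroid α) (X : Set α) : ℕ∞ :=
  ⨆ I ∈ {I : Set α | M.Indep I ∧ I ⊆ X}, I.encard

/-- `M.ConnBddBy X k` says that the connectivity `λ_M(X) = r(X) + r(E − X) − r(M)`
is at most `k`, phrased without subtraction. -/
def ConnBddBy (M : Matroid α) (X : Set α) (k : ℕ) : Prop :=
  M.eRk' X + M.eRk' (M.E \ X) ≤ M.eRk' M.E + (k : ℕ∞)

/-- `(X, Y)` is a `k`-separation of `M`: a partition of the ground set with both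
sides of size at least `k` and `λ_M(X) ≤ k − 1`. -/
def IsKSep (M : Matroid α) (k : ℕ) (X Y : Set α) : Prop :=
  Disjoint X Y ∧ X ∪ Y = M.E ∧ (k : ℕ∞) ≤ X.encard ∧ (k : ℕ∞) ≤ Y.encard ∧
    M.ConnBddBy X (k - 1)

/-- A matroid is `n`-connected if it has no `k`-separation for any `k < n`. -/
def NConnected (M : Matroid α) (n : ℕ) : Prop :=
  ∀ k : ℕ, 0 < k → k < n → ∀ X Y : Set α, ¬ M.IsKSep k X Y

/-- A matroid is 3-connected if it has no 1- or 2-separation. -/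
def ThreeConnected (M : Matroid α) : Prop := M.NConnected 3

/-- A matroid is 4-connected if it has no 1-, 2- or 3-separation. -/
def FourConnected (M : Matroid α) : Prop := M.NConnected 4

/-- A matroid is `(4, k)`-connected if it is 3-connected and every 3-separation
has a side with at most `k` elements. -/
def FourKConnected (M : Matroid α) (k : ℕ) : Prop :=
  M.ThreeConnected ∧ ∀ X Y : Set α, M.IsKSep 3 X Y →
    X.encard ≤ (k : ℕ∞) ∨ Y.encard ≤ (k : ℕ∞)

/-- A matroid is internally 4-connected if it is (4, 3)-connected. -/
def InternallyFourConnected (M : Matroid α) : Prop := M.FourKConnected 3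

/-- A `(4, 3)`-violator is a 3-separation with both sides of size at least 4. -/
def Violator43 (M : Matroid α) (X Y : Set α) : Prop :=
  M.IsKSep 3 X Y ∧ (4 : ℕ∞) ≤ X.encard ∧ (4 : ℕ∞) ≤ Y.encard

/-- Two matroids are isomorphic if there is a bijection between their ground sets
carrying independent sets to independent sets in both directions. -/
def IsIsoTo (M : Matroid α) (N : Matroid β) : Prop :=
  ∃ e : M.E ≃ N.E, ∀ I : Set M.E,
    M.Indep (Subtype.val '' I) ↔ N.Indep (Subtype.val '' (e '' I))

/-- `N` is a minor of `M` if it is obtained from `M` by contracting a set and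
deleting a disjoint set. -/
def IsMinorOf (N M : Matroid α) : Prop :=
  ∃ C D : Set α, Disjoint C D ∧ C ⊆ M.E ∧ D ⊆ M.E ∧ N = (M.Con C).Del D

/-- `M` has an `N`-minor: a minor of `M` isomorphic to `N`. -/
def HasIsoMinor (M : Matroid α) (N : Matroid β) : Prop :=
  ∃ M₀ : Matroid α, M₀.IsMinorOf M ∧ M₀.IsIsoTo N

/-- `M` has a proper `N`-minor: a proper minor of `M` isomorphic to `N`. -/
def HasProperIsoMinor (M : Matroid α) (N : Matroid β) : Prop :=
  ∃ M₀ : Matroid α, M₀.IsMinorOf M ∧ M₀ ≠ M ∧ M₀.IsIsoTo N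

/-- A matroid is binary if it is representable over `GF(2)`. -/
def IsBinary (M : Matroid α) : Prop :=
  ∃ (ι : Type u) (v : α → ι → ZMod 2), ∀ I : Set α,
    M.Indep I ↔ I ⊆ M.E ∧ LinearIndependent (ZMod 2) (fun x : I => v x)

/-- A 4-fan: an ordering `(a, b, c, d)` of a 4-element set with `{a,b,c}` a
triangle and `{b,c,d}` a triad. -/
def Is4FanOrdering (M : Matroid α) (a b c d : α) : Prop :=
  ({a, b, c, d} : Set α).encard = 4 ∧
    M.IsTriangle {a, b, c} ∧ M.IsTriad {b, c, d}

/-- A 5-fan: an ordering of a 5-element set whose alternating sequence contains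
two triangles. -/
def Is5FanOrdering (M : Matroid α) (a b c d e : α) : Prop :=
  ({a, b, c, d, e} : Set α).encard = 5 ∧
    M.IsTriangle {a, b, c} ∧ M.IsTriad {b, c, d} ∧ M.IsTriangle {c, d, e}

/-- A 5-cofan: an ordering of a 5-element set whose alternating sequence contains
two triads. -/
def Is5CofanOrdering (M : Matroid α) (a b c d e : α) : Prop :=
  ({a, b, c, d, e} : Set α).encard = 5 ∧
    M.IsTriad {a, b, c} ∧ M.IsTriangle {b, c, d} ∧ M.IsTriad {c, d, e}

/-- A fan ordering `(s 0, …, s (n-1))`: the consecutive triples form an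
alternating sequence of triangles and triads. -/
def IsFanOrdering (M : Matroid α) (n : ℕ) (s : ℕ → α) : Prop :=
  3 ≤ n ∧ Set.InjOn s (Set.Iio n) ∧
    ((∀ i : ℕ, i + 3 ≤ n →
        (Even i → M.IsTriangle {s i, s (i + 1), s (i + 2)}) ∧
        (¬ Even i → M.IsTriad {s i, s (i + 1), s (i + 2)})) ∨
     (∀ i : ℕ, i + 3 ≤ n →
        (Even i → M.IsTriad {s i, s (i + 1), s (i + 2)}) ∧
        (¬ Even i → M.IsTriangle {s i, s (i + 1), s (i + 2)})))

/-- The counterexample hypotheses on a pair `(M, N)`. -/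
def CexHyp (M : Matroid α) (N : Matroid β) : Prop :=
  M.IsBinary ∧ N.IsBinary ∧
  M.InternallyFourConnected ∧ N.InternallyFourConnected ∧
  M.HasProperIsoMinor N ∧
  (8 : ℕ∞) ≤ N.E.encard ∧ (11 : ℕ∞) ≤ M.E.encard ∧
  (∀ T : Set α, M.IsTriangle T → ∀ e ∈ T, ¬ (M.Del {e}).HasIsoMinor N) ∧
  (∀ T : Set α, M.IsTriad T → ∀ e ∈ T, ¬ (M.Con {e}).HasIsoMinor N) ∧
  ¬ ∃ M' : Matroid α, M'.IsMinorOf M ∧ M'.InternallyFourConnected ∧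
      M'.HasIsoMinor N ∧
      M'.E.encard + 1 ≤ M.E.encard ∧ M.E.encard ≤ M'.E.encard + 2

end Matroid

/-! Add the elements of the fan one at a time in fan order. The element `s k` completes the
triple `{s (k-2), s (k-1), s k}`, a triangle or a triad. For a triangle, `s k` is in the closure
of the earlier elements, so `r(X)` stays put while `r(E - X)` cannot grow; for a triad, `s k` is
outside the closure of the new complement, so `r(E - X)` drops by one while `r(X)` grows by at
most one. Thus `r(X) + r(E - X)` never increases, and it is at most `r(M) + 2` after the first
two elements. -/

namespace Matroid

variable {α : Type u} {M : Matroid α} {C K T X : Set α} {e : α}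

lemma isCircuit'_iff_isCircuit : M.IsCircuit' C ↔ M.IsCircuit C :=
  isCircuit_iff_forall_ssubset.symm

lemma isCocircuit'_iff_isCocircuit : M.IsCocircuit' K ↔ M.IsCocircuit K :=
  isCircuit'_iff_isCircuit

lemma eRk'_eq_eRk (M : Matroid α) (X : Set α) : M.eRk' X = M.eRk X := by
  refine le_antisymm (iSup₂_le fun I hI ↦ hI.1.encard_le_eRk_of_subset hI.2) ?_
  obtain ⟨I, hI⟩ := M.exists_isBasis' X
  rw [← hI.encard_eq_eRk]
  exact le_iSup₂_of_le (f := fun I (_ : I ∈ {I | M.Indep I ∧ I ⊆ X}) ↦ I.encard) I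
    ⟨hI.indep, hI.subset⟩ le_rfl

lemma IsCocircuit.notMem_closure_of_disjoint (hK : M.IsCocircuit K) (heK : e ∈ K)
    (hXK : Disjoint X K) : e ∉ M.closure X := by
  intro he
  obtain ⟨C, hCX, hC, heC⟩ :=
    exists_isCircuit_of_mem_closure he (Set.disjoint_right.1 hXK heK)
  refine hC.inter_isCocircuit_ne_singleton hK (Set.eq_singleton_iff_unique_mem.2 ⟨⟨heC, heK⟩, ?_⟩)
  rintro f ⟨hfC, hfK⟩
  exact (hCX hfC).resolve_right fun hfX ↦ Set.disjoint_left.1 hXK hfX hfK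

lemma eRk_insert_add_eRk_compl_le (he : e ∈ M.E \ X) (heT : e ∈ T) (hTX : T ⊆ insert e X)
    (hT : M.IsCircuit T ∨ M.IsCocircuit T) :
    M.eRk (insert e X) + M.eRk (M.E \ insert e X) ≤ M.eRk X + M.eRk (M.E \ X) := by
  rcases hT with hT | hT
  · have hecl : e ∈ M.closure X := M.closure_subset_closure
      (Set.sdiff_singleton_subset_iff.2 hTX) (hT.mem_closure_sdiff_singleton_of_mem heT)
    rw [← eRk_closure_eq, closure_insert_eq_of_mem_closure hecl, eRk_closure_eq]
    exact add_le_add le_rfl (M.eRk_mono (Set.sdiff_subset_sdiff_right (Set.subset_insert e X)))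
  · have hecl : e ∉ M.closure (M.E \ insert e X) := hT.notMem_closure_of_disjoint heT
      (Set.disjoint_of_subset_right hTX Set.disjoint_sdiff_left)
    have hcompl : insert e (M.E \ insert e X) = M.E \ X := by
      ext f
      by_cases hfe : f = e <;> simp_all
    calc M.eRk (insert e X) + M.eRk (M.E \ insert e X)
        ≤ M.eRk X + 1 + M.eRk (M.E \ insert e X) := by gcongr; exact M.eRk_insert_le_add_one e X
      _ = M.eRk X + M.eRk (M.E \ X) := by
        rw [← hcompl, eRk_insert_eq_add_one ⟨he.1, hecl⟩, add_assoc, add_comm 1]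

lemma IsFanOrdering.isCircuit_or_isCocircuit {n i : ℕ} {s : ℕ → α} (h : M.IsFanOrdering n s)
    (hi : i + 3 ≤ n) :
    M.IsCircuit {s i, s (i + 1), s (i + 2)} ∨ M.IsCocircuit {s i, s (i + 1), s (i + 2)} := by
  rw [← isCircuit'_iff_isCircuit, ← isCocircuit'_iff_isCocircuit]
  rcases h.2.2 with h | h <;> by_cases hi2 : Even i
  exacts [.inl ((h i hi).1 hi2).1, .inr ((h i hi).2 hi2).1,
    .inr ((h i hi).1 hi2).1, .inl ((h i hi).2 hi2).1]

lemma IsFanOrdering.eRk_image_Iio_add_eRk_compl_le {n k : ℕ} {s : ℕ → α}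
    (h : M.IsFanOrdering n s) (hk : 2 ≤ k) (hkn : k ≤ n) :
    M.eRk (s '' Set.Iio k) + M.eRk (M.E \ s '' Set.Iio k) ≤ M.eRank + 2 := by
  induction k, hk using Nat.le_induction with
  | base =>
    rw [add_comm]
    gcongr
    · exact M.eRk_le_eRank _
    · calc M.eRk (s '' Set.Iio 2) ≤ (s '' Set.Iio 2).encard := M.eRk_le_encard _
        _ ≤ (Set.Iio 2).encard := Set.encard_image_le s _
        _ = 2 := by simp [← Finset.coe_range, Set.encard_coe_eq_coe_finsetCard]
  | succ k hk ih =>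
    obtain ⟨i, rfl⟩ : ∃ i, k = i + 2 := ⟨k - 2, by omega⟩
    have hT := h.isCircuit_or_isCocircuit (i := i) (by omega)
    have hTE : {s i, s (i + 1), s (i + 2)} ⊆ M.E := hT.elim (·.subset_ground) (·.subset_ground)
    have hnew : s (i + 2) ∉ s '' Set.Iio (i + 2) := by
      rintro ⟨j, hj : j < i + 2, hji⟩
      exact hj.ne (h.2.1 (Set.mem_Iio.2 (by omega)) (Set.mem_Iio.2 hkn) hji)
    have hTX : {s i, s (i + 1), s (i + 2)} ⊆ insert (s (i + 2)) (s '' Set.Iio (i + 2)) := by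
      rintro _ (rfl | rfl | rfl)
      · exact .inr ⟨i, by simp, rfl⟩
      · exact .inr ⟨i + 1, by simp, rfl⟩
      · exact .inl rfl
    rw [Set.Iio_add_one_eq_Iic, ← Set.Iio_insert, Set.image_insert_eq]
    exact (eRk_insert_add_eRk_compl_le ⟨hTE (by simp), hnew⟩ (by simp) hTX hT).trans
      (ih (by omega))

end Matroid

open Matroid

/-- the set of elements of a fan is 3-separating, that is,
`λ_M({s_1, …, s_n}) ≤ 2`. -/
theorem statement_2 {α : Type u} (M : Matroid α) (n : ℕ) (s : ℕ → α)
    (hfan : M.IsFanOrdering n s) :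
    M.ConnBddBy (s '' Set.Iio n) 2 := by
  rw [ConnBddBy, eRk'_eq_eRk, eRk'_eq_eRk, eRk'_eq_eRk, eRk_ground]
  exact hfan.eRk_image_Iio_add_eRk_compl_le (by linarith [hfan.1]) le_rfl
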